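/- arXiv:2407.11528 — 11 statements merged into one kernel-verified Lean document; each statement's English description precedes it below -/
import Mathlib

section
/- The set of round ideals 𝔯L of a proximity frame (L,≺) is a subframe of the frame 𝔍L of all ideals of L: it is closed under finite meets (intersections) and arbitrary joins computed in 𝔍L. -/
open Set

variable {L M : Type*}

/-- An ideal of a frame: contains ⊥, is a downset, and is closed under binary joins. -/
def IsIdl [Order.Frame L] (I : Set L) : Prop :=
  ⊥ ∈ I ∧ (∀ a b : L, a ≤ b → b ∈ I → a ∈ I) ∧ (∀ a b : L, a ∈ I → b ∈ I → a ⊔ b ∈ I)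

/-- Roundness of a subset with respect to a relation `r`. -/
def IsRnd [Order.Frame L] (r : L → L → Prop) (I : Set L) : Prop :=
  ∀ a ∈ I, ∃ b ∈ I, r a b

/-- A round ideal. -/
def RndIdl [Order.Frame L] (r : L → L → Prop) (I : Set L) : Prop :=
  IsIdl I ∧ IsRnd r I

/-- The join of a collection of ideals: all finite joins of elements of the union. -/
def idlJoin [Order.Frame L] (𝒥 : Set (Set L)) : Set L :=
  {a | ∃ F : Finset L, (↑F : Set L) ⊆ ⋃₀ 𝒥 ∧ a = F.sup id}

/-- The way-below relation in the frame of round ideals (directed joins are unions). -/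
def wb [Order.Frame L] (r : L → L → Prop) (I J : Set L) : Prop :=
  ∀ 𝒟 : Set (Set L), 𝒟.Nonempty → (∀ K ∈ 𝒟, RndIdl r K) →
    DirectedOn (· ⊆ ·) 𝒟 → J ⊆ ⋃₀ 𝒟 → ∃ K ∈ 𝒟, I ⊆ K

/-- A proximity on a frame. -/
structure IsProx [Order.Frame L] (r : L → L → Prop) : Prop where
  rel_le : ∀ a b : L, r a b → a ≤ b
  rel_bot : r ⊥ ⊥
  rel_top : r ⊤ ⊤
  rel_sup : ∀ a b c d : L, r a b → r c d → r (a ⊔ c) (b ⊔ d)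
  rel_inf : ∀ a b c d : L, r a b → r c d → r (a ⊓ c) (b ⊓ d)
  rel_mono : ∀ a b c d : L, a ≤ b → r b c → c ≤ d → r a d
  rel_interp : ∀ a b : L, r a b → ∃ c, r a c ∧ r c b
  rel_apprx : ∀ a : L, a = sSup {b | r b a}

/-- κ_L(a) = {b | b ≺ a}. -/
def kap [Order.Frame L] (r : L → L → Prop) (a : L) : Set L := {b | r b a}

/-- 𝔯f(I) = {a | a ≺ f(b) for some b ∈ I}. -/
def rmap [Order.Frame L] [Order.Frame M] (s : M → M → Prop) (f : L → M) (I : Set L) :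
    Set M := {a | ∃ b ∈ I, s a (f b)}

/-- round ideals form a subframe of the ideal frame: closed under
finite meets (including the top ideal) and arbitrary ideal joins. -/
theorem stmt0 [Order.Frame L] (r : L → L → Prop) (hr : IsProx r) :
    RndIdl r (Set.univ : Set L) ∧
    (∀ I J : Set L, RndIdl r I → RndIdl r J → RndIdl r (I ∩ J)) ∧
    (∀ 𝒥 : Set (Set L), (∀ K ∈ 𝒥, RndIdl r K) → RndIdl r (idlJoin 𝒥)) := by
  classical
  constructor
  · exact ⟨⟨trivial, fun _ _ _ _ => trivial, fun _ _ _ _ => trivial⟩,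
      fun a _ => ⟨⊤, trivial, hr.rel_mono a ⊤ ⊤ ⊤ le_top hr.rel_top le_rfl⟩⟩
  constructor
  · rintro I J ⟨⟨hIb, hId, hIs⟩, hIr⟩ ⟨⟨hJb, hJd, hJs⟩, hJr⟩
    refine ⟨⟨⟨hIb, hJb⟩, fun a b hab hb => ⟨hId a b hab hb.1, hJd a b hab hb.2⟩,
      fun a b ha hb => ⟨hIs a b ha.1 hb.1, hJs a b ha.2 hb.2⟩⟩, ?_⟩
    rintro a ⟨haI, haJ⟩
    obtain ⟨b, hbI, hab⟩ := hIr a haI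
    obtain ⟨c, hcJ, hac⟩ := hJr a haJ
    refine ⟨b ⊓ c, ⟨hId _ b inf_le_left hbI, hJd _ c inf_le_right hcJ⟩, ?_⟩
    have := hr.rel_inf a b a c hab hac
    simpa using this
  · intro 𝒥 h𝒥
    constructor
    · refine ⟨⟨∅, by simp, by simp⟩, ?_, ?_⟩
      · rintro a b hab ⟨F, hF, rfl⟩
        refine ⟨F.image (fun x => a ⊓ x), ?_, ?_⟩
        · intro x hx
          simp only [Finset.coe_image, Set.mem_image, Finset.mem_coe] at hx
          obtain ⟨y, hy, rfl⟩ := hx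
          obtain ⟨K, hK, hyK⟩ := hF hy
          exact ⟨K, hK, (h𝒥 K hK).1.2.1 _ y inf_le_right hyK⟩
        · rw [Finset.sup_image]
          have : a = a ⊓ F.sup id := le_antisymm (le_inf le_rfl hab) inf_le_left
          conv_lhs => rw [this]
          rw [Finset.sup_inf_distrib_left]
          rfl
      · rintro a b ⟨F, hF, rfl⟩ ⟨G, hG, rfl⟩
        exact ⟨F ∪ G, by rw [Finset.coe_union]; exact Set.union_subset hF hG,
          (Finset.sup_union).symm⟩
    · rintro a ⟨F, hF, rfl⟩
      induction F using Finset.induction_on with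
      | empty => exact ⟨⊥, ⟨∅, by simp, by simp⟩, by simpa using hr.rel_bot⟩
      | @insert f F hfF ih =>
        have hf : f ∈ ⋃₀ 𝒥 := hF (by simp)
        obtain ⟨K, hK, hfK⟩ := hf
        obtain ⟨g, hgK, hfg⟩ := (h𝒥 K hK).2 f hfK
        obtain ⟨b, ⟨G, hG, rfl⟩, hb⟩ := ih (fun x hx => hF (by simp [Finset.mem_coe.mp hx]))
        refine ⟨g ⊔ G.sup id, ⟨insert g G, ?_, by simp⟩, ?_⟩
        · rw [Finset.coe_insert]
          exact Set.insert_subset ⟨K, hK, hgK⟩ hG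
        · rw [Finset.sup_insert]
          exact hr.rel_sup f g (F.sup id) (G.sup id) hfg hb
end

section
/- For a proximity frame (L,≺), the map ς_L : 𝔯L → L sending a round ideal to its join is a frame homomorphism (preserves finite meets and arbitrary joins). -/
open Set

variable {L M : Type*}

/-- the join map ς_L : 𝔯L → L is a frame homomorphism. -/
theorem stmt1 [Order.Frame L] (r : L → L → Prop) (hr : IsProx r) :
    sSup (Set.univ : Set L) = ⊤ ∧
    (∀ I J : Set L, RndIdl r I → RndIdl r J → sSup (I ∩ J) = sSup I ⊓ sSup J) ∧
    (∀ 𝒥 : Set (Set L), (∀ K ∈ 𝒥, RndIdl r K) →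
      sSup (idlJoin 𝒥) = ⨆ I ∈ 𝒥, sSup I) := by
  refine ⟨by simp, ?_, ?_⟩
  · intro I J hI hJ
    apply le_antisymm
    · exact le_inf (sSup_le_sSup inter_subset_left) (sSup_le_sSup inter_subset_right)
    · rw [sSup_inf_sSup]
      apply iSup_le; rintro ⟨a, b⟩; apply iSup_le; rintro ⟨ha, hb⟩
      exact le_sSup ⟨hI.1.2.1 _ _ inf_le_left ha, hJ.1.2.1 _ _ inf_le_right hb⟩
  · intro 𝒥 h𝒥
    apply le_antisymm
    · apply sSup_le
      rintro a ⟨F, hF, rfl⟩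
      apply Finset.sup_le
      intro b hb
      obtain ⟨I, hI, hbI⟩ := hF hb
      exact le_trans (le_sSup hbI) (le_iSup₂ (f := fun I (_ : I ∈ 𝒥) => sSup I) I hI)
    · apply iSup₂_le
      intro I hI
      apply sSup_le
      intro a ha
      exact le_sSup ⟨{a}, by simpa using ⟨I, hI, ha⟩, by simp⟩
end

section
/- If f : L → M is a meet-semilattice homomorphism between proximity frames, then the map 𝔯f : 𝔯L → 𝔯M defined by 𝔯f(I) = {a ∈ M | a ≺ f(b) for some b ∈ I} is well-defined (sends round ideals to round ideals) and is a meet-semilattice homomorphism preserving the top. -/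
open Set

variable {L M : Type*}

/-- for a meet-semilattice homomorphism f, 𝔯f is well-defined and a
meet-semilattice homomorphism preserving the top. -/
theorem stmt2 [Order.Frame L] [Order.Frame M] (r : L → L → Prop) (s : M → M → Prop)
    (hr : IsProx r) (hs : IsProx s) (f : L → M)
    (hf_inf : ∀ a b : L, f (a ⊓ b) = f a ⊓ f b) (hf_top : f ⊤ = ⊤) :
    (∀ I : Set L, RndIdl r I → RndIdl s (rmap s f I)) ∧
    (∀ I J : Set L, RndIdl r I → RndIdl r J →
      rmap s f (I ∩ J) = rmap s f I ∩ rmap s f J) ∧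
    rmap s f (Set.univ : Set L) = Set.univ := by
  have hfmono : ∀ a b : L, a ≤ b → f a ≤ f b := by
    intro a b hab
    have : f (a ⊓ b) = f a ⊓ f b := hf_inf a b
    rw [inf_eq_left.mpr hab] at this
    exact le_of_eq_of_le this inf_le_right
  refine ⟨?_, ?_, ?_⟩
  · intro I ⟨⟨hbot, hdown, hjoin⟩, hrnd⟩
    refine ⟨⟨⟨⊥, hbot, hs.rel_mono _ _ _ _ le_rfl hs.rel_bot bot_le⟩, ?_, ?_⟩, ?_⟩
    · rintro a b hab ⟨c, hc, hsc⟩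
      exact ⟨c, hc, hs.rel_mono _ _ _ _ hab hsc le_rfl⟩
    · rintro a b ⟨c, hc, hsc⟩ ⟨d, hd, hsd⟩
      exact ⟨c ⊔ d, hjoin c d hc hd,
        hs.rel_mono _ _ _ _ le_rfl (hs.rel_sup _ _ _ _ hsc hsd)
          (sup_le (hfmono _ _ le_sup_left) (hfmono _ _ le_sup_right))⟩
    · rintro a ⟨b, hb, hsb⟩
      obtain ⟨c, hac, hcb⟩ := hs.rel_interp _ _ hsb
      exact ⟨c, ⟨b, hb, hcb⟩, hac⟩
  · intro I J ⟨⟨_, hdI, _⟩, _⟩ ⟨⟨_, hdJ, _⟩, _⟩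
    ext a
    constructor
    · rintro ⟨b, ⟨hbI, hbJ⟩, hsb⟩
      exact ⟨⟨b, hbI, hsb⟩, ⟨b, hbJ, hsb⟩⟩
    · rintro ⟨⟨b, hbI, hsb⟩, ⟨c, hcJ, hsc⟩⟩
      refine ⟨b ⊓ c, ⟨hdI _ _ inf_le_left hbI, hdJ _ _ inf_le_right hcJ⟩, ?_⟩
      have := hs.rel_inf _ _ _ _ hsb hsc
      rw [inf_idem, ← hf_inf] at this
      exact this
  · ext a
    simp only [Set.mem_univ, iff_true]
    exact ⟨⊤, trivial, hs.rel_mono _ _ _ _ le_top hs.rel_top (le_of_eq hf_top.symm)⟩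
end

section
/- If f : L → M is a meet-semilattice homomorphism between proximity frames preserving ≺, then 𝔯f is proper: I ≪ J in 𝔯L implies 𝔯f(I) ≪ 𝔯f(J) in 𝔯M, where ≪ is the way-below relation. -/
open Set

variable {L M : Type*}

lemma kap_rndIdl [Order.Frame L] {r : L → L → Prop} (hr : IsProx r) (a : L) :
    RndIdl r (kap r a) := by
  refine ⟨⟨?_, ?_, ?_⟩, ?_⟩
  · exact hr.rel_mono ⊥ ⊥ ⊥ a le_rfl hr.rel_bot bot_le
  · intro x y hxy hy
    exact hr.rel_mono x y a a hxy hy le_rfl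
  · intro x y hx hy
    simpa [kap] using hr.rel_sup x a y a hx hy
  · intro x hx
    obtain ⟨c, h1, h2⟩ := hr.rel_interp x a hx
    exact ⟨c, h2, h1⟩

/-- 𝔯f is proper: it preserves the way-below relation. -/
theorem stmt4 [Order.Frame L] [Order.Frame M] (r : L → L → Prop) (s : M → M → Prop)
    (hr : IsProx r) (hs : IsProx s) (f : L → M)
    (hf_inf : ∀ a b : L, f (a ⊓ b) = f a ⊓ f b) (hf_top : f ⊤ = ⊤)
    (hf_prox : ∀ a b : L, r a b → s (f a) (f b)) :
    ∀ I J : Set L, RndIdl r I → RndIdl r J → wb r I J →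
      wb s (rmap s f I) (rmap s f J) := by
  intro I J hI hJ hIJ 𝒟 h𝒟ne h𝒟ri h𝒟dir hcov
  have hmono : ∀ x y : L, x ≤ y → f x ≤ f y := by
    intro x y h
    have h1 := hf_inf x y
    rw [inf_eq_left.2 h] at h1
    rw [h1]; exact inf_le_right
  obtain ⟨K', hK'mem, hIK'⟩ := hIJ {S | ∃ a ∈ J, S = kap r a}
    ⟨kap r ⊥, ⊥, hJ.1.1, rfl⟩
    (by rintro S ⟨a, _, rfl⟩; exact kap_rndIdl hr a)
    (by rintro S ⟨a, ha, rfl⟩ T ⟨b, hb, rfl⟩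
        refine ⟨kap r (a ⊔ b), ⟨a ⊔ b, hJ.1.2.2 a b ha hb, rfl⟩, ?_, ?_⟩
        · intro x hx; exact hr.rel_mono x x a (a ⊔ b) le_rfl hx le_sup_left
        · intro x hx; exact hr.rel_mono x x b (a ⊔ b) le_rfl hx le_sup_right)
    (by intro b hb
        obtain ⟨c, hc, hrc⟩ := hJ.2 b hb
        exact ⟨kap r c, ⟨c, hc, rfl⟩, hrc⟩)
  obtain ⟨a, haJ, rfl⟩ := hK'mem
  obtain ⟨a', ha'J, hraa'⟩ := hJ.2 a haJ
  have hfa : f a ∈ rmap s f J := ⟨a', ha'J, hf_prox a a' hraa'⟩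
  obtain ⟨K, hK𝒟, hfaK⟩ := hcov hfa
  refine ⟨K, hK𝒟, ?_⟩
  rintro m ⟨b, hbI, hsm⟩
  have hba : r b a := hIK' hbI
  have hm : m ≤ f a := (hs.rel_le _ _ hsm).trans (hmono b a (hr.rel_le b a hba))
  exact (h𝒟ri K hK𝒟).1.2.1 m (f a) hm hfaK
end

section
/- The assignments θ(f) = ς_M ∘ 𝔯f and ρ(ψ) = ψ ∘ κ_L give mutually inverse bijections between the set of proximity homomorphisms L → M and the set of frame homomorphisms 𝔯L → M sending the way-below relation ≪ on 𝔯L into the proximity ≺ on M. -/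
open Set

variable {L M : Type*}

/-- A proximity homomorphism between proximity frames. -/
def IsProxHom [Order.Frame L] [Order.Frame M] (r : L → L → Prop) (s : M → M → Prop)
    (f : L → M) : Prop :=
  (∀ a b : L, f (a ⊓ b) = f a ⊓ f b) ∧ f ⊤ = ⊤ ∧ f ⊥ = ⊥ ∧
  (∀ a₁ b₁ a₂ b₂ : L, r a₁ b₁ → r a₂ b₂ → s (f (a₁ ⊔ a₂)) (f b₁ ⊔ f b₂)) ∧
  (∀ a : L, f a = sSup (f '' {b | r b a}))

/-- A frame homomorphism 𝔯L → M taking the way-below relation of 𝔯L into ≺ on M. -/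
def IsFrmHomR [Order.Frame L] [Order.Frame M] (r : L → L → Prop) (s : M → M → Prop)
    (ψ : Set L → M) : Prop :=
  (∀ I J : Set L, RndIdl r I → RndIdl r J → ψ (I ∩ J) = ψ I ⊓ ψ J) ∧
  ψ Set.univ = ⊤ ∧
  (∀ 𝒥 : Set (Set L), (∀ K ∈ 𝒥, RndIdl r K) → ψ (idlJoin 𝒥) = ⨆ K ∈ 𝒥, ψ K) ∧
  (∀ I J : Set L, RndIdl r I → RndIdl r J → wb r I J → s (ψ I) (ψ J))

section AuxLemmas
variable [Order.Frame L] [Order.Frame M] {r : L → L → Prop} {s : M → M → Prop}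

lemma prox_trans (hr : IsProx r) {a b c : L} (h1 : r a b) (h2 : r b c) : r a c :=
  hr.rel_mono a a b c le_rfl h1 (hr.rel_le b c h2)

lemma prox_bot_rel (hr : IsProx r) (a : L) : r ⊥ a :=
  hr.rel_mono ⊥ ⊥ ⊥ a le_rfl hr.rel_bot bot_le

lemma prox_top_rel (hr : IsProx r) (a : L) : r a ⊤ :=
  hr.rel_mono a ⊤ ⊤ ⊤ le_top hr.rel_top le_rfl

lemma kap_rnd (hr : IsProx r) (a : L) : RndIdl r (kap r a) := by
  refine ⟨⟨prox_bot_rel hr a, fun x y hxy hy => hr.rel_mono x y a a hxy hy le_rfl,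
    fun x y hx hy => ?_⟩, fun x hx => ?_⟩
  · simpa [kap] using hr.rel_sup x a y a hx hy
  · obtain ⟨c, h1, h2⟩ := hr.rel_interp x a hx
    exact ⟨c, h2, h1⟩

lemma kap_mono (hr : IsProx r) {a b : L} (h : a ≤ b) : kap r a ⊆ kap r b :=
  fun x hx => hr.rel_mono x x a b le_rfl hx h

lemma kap_subset_of_mem (hr : IsProx r) {I : Set L} (hI : IsIdl I) {a : L} (ha : a ∈ I) :
    kap r a ⊆ I :=
  fun x hx => hI.2.1 x a (hr.rel_le x a hx) ha

lemma sup_mem_ideal {I : Set L} (hI : IsIdl I) (F : Finset L) (h : (↑F : Set L) ⊆ I) :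
    F.sup id ∈ I := by
  induction F using Finset.cons_induction with
  | empty => simpa using hI.1
  | cons x F hx ih =>
    rw [Finset.sup_cons]
    refine hI.2.2 _ _ (h (by simp)) (ih fun y hy => h (by simp [hy]))

lemma exists_finset_r (hr : IsProx r) {𝒥 : Set (Set L)} (h𝒥 : ∀ K ∈ 𝒥, RndIdl r K)
    (F : Finset L) (hF : (↑F : Set L) ⊆ ⋃₀ 𝒥) :
    ∃ G : Finset L, (↑G : Set L) ⊆ ⋃₀ 𝒥 ∧ G.card ≤ F.card ∧ r (F.sup id) (G.sup id) := by
  classical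
  induction F using Finset.cons_induction with
  | empty => exact ⟨∅, by simp, le_rfl, by simpa using hr.rel_bot⟩
  | cons x F hx ih =>
    obtain ⟨G, hG1, hG2, hG3⟩ := ih fun y hy => hF (by simp [hy])
    have hxJ : x ∈ ⋃₀ 𝒥 := hF (by simp)
    obtain ⟨K, hK, hxK⟩ := hxJ
    obtain ⟨y, hyK, hxy⟩ := (h𝒥 K hK).2 x hxK
    refine ⟨insert y G, ?_, ?_, ?_⟩
    · intro z hz
      simp only [Finset.coe_insert, Set.mem_insert_iff] at hz
      rcases hz with rfl | hz
      · exact ⟨K, hK, hyK⟩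
      · exact hG1 hz
    · calc (insert y G).card ≤ G.card + 1 := Finset.card_insert_le _ _
        _ ≤ F.card + 1 := by omega
        _ = (Finset.cons x F hx).card := (Finset.card_cons hx).symm
    · rw [Finset.sup_cons, Finset.sup_insert]
      exact hr.rel_sup x y (F.sup id) (G.sup id) hxy hG3

lemma idlJoin_rnd (hr : IsProx r) {𝒥 : Set (Set L)} (h𝒥 : ∀ K ∈ 𝒥, RndIdl r K) :
    RndIdl r (idlJoin 𝒥) := by
  classical
  refine ⟨⟨⟨∅, by simp⟩, ?_, ?_⟩, ?_⟩
  · rintro a b hab ⟨F, hF, rfl⟩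
    refine ⟨F.image (fun x => a ⊓ x), ?_, ?_⟩
    · intro z hz
      simp only [Finset.coe_image, Set.mem_image, Finset.mem_coe] at hz
      obtain ⟨x, hx, rfl⟩ := hz
      obtain ⟨K, hK, hxK⟩ := hF hx
      exact ⟨K, hK, (h𝒥 K hK).1.2.1 _ x inf_le_right hxK⟩
    · rw [Finset.sup_image]
      have h2 : F.sup (id ∘ fun x => a ⊓ x) = F.sup (fun x => a ⊓ x) := rfl
      rw [h2, ← Finset.sup_inf_distrib_left]
      exact (inf_eq_left.mpr hab).symm
  · rintro a b ⟨F, hF, rfl⟩ ⟨G, hG, rfl⟩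
    exact ⟨F ∪ G, by rw [Finset.coe_union]; exact Set.union_subset hF hG,
      (Finset.sup_union).symm⟩
  · rintro a ⟨F, hF, rfl⟩
    obtain ⟨G, hG1, _, hG3⟩ := exists_finset_r hr h𝒥 F hF
    exact ⟨G.sup id, ⟨G, hG1, rfl⟩, hG3⟩

lemma wb_of_kap (hr : IsProx r) {I J : Set L} {a : L} (ha : a ∈ J) (hIa : I ⊆ kap r a) :
    wb r I J := by
  intro 𝒟 _ h𝒟 _ hcov
  obtain ⟨K, hK, haK⟩ := hcov ha
  exact ⟨K, hK, fun x hx => (h𝒟 K hK).1.2.1 x a (hr.rel_le x a (hIa hx)) haK⟩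

lemma wb_to_kap (hr : IsProx r) {I J : Set L} (hJ : RndIdl r J) (h : wb r I J) :
    ∃ a ∈ J, I ⊆ kap r a := by
  obtain ⟨K, hK, hIK⟩ := h (kap r '' J) ⟨kap r ⊥, ⟨⊥, hJ.1.1, rfl⟩⟩
    (by rintro K ⟨a, _, rfl⟩; exact kap_rnd hr a)
    (by
      rintro K ⟨a, haJ, rfl⟩ K' ⟨b, hbJ, rfl⟩
      exact ⟨kap r (a ⊔ b), ⟨a ⊔ b, hJ.1.2.2 a b haJ hbJ, rfl⟩,
        kap_mono hr le_sup_left, kap_mono hr le_sup_right⟩)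
    (by
      intro a haJ
      obtain ⟨b, hbJ, hab⟩ := hJ.2 a haJ
      exact ⟨kap r b, ⟨b, hbJ, rfl⟩, hab⟩)
  obtain ⟨a, haJ, rfl⟩ := hK
  exact ⟨a, haJ, hIK⟩

lemma kap_inf (hr : IsProx r) (a b : L) : kap r (a ⊓ b) = kap r a ∩ kap r b := by
  ext x
  constructor
  · intro hx
    exact ⟨hr.rel_mono x x (a ⊓ b) a le_rfl hx inf_le_left,
      hr.rel_mono x x (a ⊓ b) b le_rfl hx inf_le_right⟩
  · rintro ⟨h1, h2⟩
    simpa [kap] using hr.rel_inf x a x b h1 h2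

lemma kap_top (hr : IsProx r) : kap r (⊤ : L) = Set.univ :=
  Set.eq_univ_of_forall fun x => prox_top_rel hr x

lemma kap_bot (hr : IsProx r) : kap r (⊥ : L) = idlJoin (∅ : Set (Set L)) := by
  ext x
  constructor
  · intro hx
    have : x = ⊥ := le_bot_iff.mp (hr.rel_le x ⊥ hx)
    exact ⟨∅, by simp, by simp [this]⟩
  · rintro ⟨F, hF, rfl⟩
    have hFe : F = ∅ := by
      rw [← Finset.coe_eq_empty]
      simpa using hF
    subst hFe
    simpa [kap] using hr.rel_bot

lemma inter_rnd (hr : IsProx r) {I J : Set L} (hI : RndIdl r I) (hJ : RndIdl r J) :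
    RndIdl r (I ∩ J) := by
  refine ⟨⟨⟨hI.1.1, hJ.1.1⟩, fun a b hab hb => ⟨hI.1.2.1 a b hab hb.1, hJ.1.2.1 a b hab hb.2⟩,
    fun a b ha hb => ⟨hI.1.2.2 a b ha.1 hb.1, hJ.1.2.2 a b ha.2 hb.2⟩⟩, ?_⟩
  rintro a ⟨haI, haJ⟩
  obtain ⟨b, hbI, hab⟩ := hI.2 a haI
  obtain ⟨c, hcJ, hac⟩ := hJ.2 a haJ
  refine ⟨b ⊓ c, ⟨hI.1.2.1 _ b inf_le_left hbI, hJ.1.2.1 _ c inf_le_right hcJ⟩, ?_⟩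
  simpa using hr.rel_inf a b a c hab hac

lemma rnd_eq_idlJoin_kap (hr : IsProx r) {I : Set L} (hI : RndIdl r I) :
    I = idlJoin (kap r '' I) := by
  apply Set.Subset.antisymm
  · intro a haI
    obtain ⟨b, hbI, hab⟩ := hI.2 a haI
    refine ⟨{a}, ?_, by simp⟩
    simp only [Finset.coe_singleton, Set.singleton_subset_iff]
    exact ⟨kap r b, ⟨b, hbI, rfl⟩, hab⟩
  · rintro a ⟨F, hF, rfl⟩
    refine sup_mem_ideal hI.1 F fun x hx => ?_
    obtain ⟨K, ⟨b, hbI, rfl⟩, hxK⟩ := hF hx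
    exact kap_subset_of_mem hr hI.1 hbI hxK

end AuxLemmas
section Part1
variable [Order.Frame L] [Order.Frame M] {r : L → L → Prop} {s : M → M → Prop} {f : L → M}

lemma f_mono (hf : IsProxHom r s f) {a b : L} (h : a ≤ b) : f a ≤ f b := by
  have : f (a ⊓ b) = f a ⊓ f b := hf.1 a b
  rw [inf_eq_left.mpr h] at this
  rw [this]
  exact inf_le_right

lemma f_s_of_r (hf : IsProxHom r s f) {a b : L} (h : r a b) : s (f a) (f b) := by
  simpa using hf.2.2.2.1 a b a b h h

lemma theta_eq (hs : IsProx s) (hf : IsProxHom r s f) (I : Set L) :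
    sSup (rmap s f I) = sSup (f '' I) := by
  apply le_antisymm
  · apply sSup_le
    rintro m ⟨b, hbI, hmb⟩
    exact le_trans (hs.rel_le m (f b) hmb) (le_sSup ⟨b, hbI, rfl⟩)
  · apply sSup_le
    rintro m ⟨b, hbI, rfl⟩
    rw [hf.2.2.2.2 b]
    apply sSup_le
    rintro m ⟨x, hxb, rfl⟩
    exact le_sSup ⟨b, hbI, f_s_of_r hf hxb⟩

lemma theta_mono {I J : Set L} (h : I ⊆ J) :
    sSup (rmap s f I) ≤ sSup (rmap s f J) := by
  apply sSup_le_sSup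
  rintro m ⟨b, hbI, hmb⟩
  exact ⟨b, h hbI, hmb⟩

lemma theta_bound (hr : IsProx r) (hs : IsProx s) (hf : IsProxHom r s f) {𝒥 : Set (Set L)}
    (h𝒥 : ∀ K ∈ 𝒥, RndIdl r K) :
    ∀ n (F : Finset L), F.card ≤ n → (↑F : Set L) ⊆ ⋃₀ 𝒥 →
      f (F.sup id) ≤ ⨆ K ∈ 𝒥, sSup (rmap s f K) := by
  intro n
  induction n with
  | zero =>
    intro F hcard _
    have : F = ∅ := Finset.card_eq_zero.mp (Nat.le_zero.mp hcard)
    subst this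
    simp [hf.2.2.1]
  | succ n ih =>
    intro F hcard hF
    rcases F.eq_empty_or_nonempty with rfl | ⟨x, hxF⟩
    · simp [hf.2.2.1]
    · classical
      set F' := F.erase x with hF'
      have hFx : F = insert x F' := (Finset.insert_erase hxF).symm
      have hsup : F.sup id = x ⊔ F'.sup id := by
        rw [hFx, Finset.sup_insert]; rfl
      have hF'sub : (↑F' : Set L) ⊆ ⋃₀ 𝒥 := fun y hy => hF (Finset.erase_subset x F hy)
      obtain ⟨K, hK, hxK⟩ := hF (by exact_mod_cast hxF)
      obtain ⟨y, hyK, hxy⟩ := (h𝒥 K hK).2 x hxK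
      obtain ⟨G, hG1, hG2, hG3⟩ := exists_finset_r hr h𝒥 F' hF'sub
      have hcard' : G.card ≤ n := by
        have : F'.card = F.card - 1 := Finset.card_erase_of_mem hxF
        omega
      have hstep : s (f (x ⊔ F'.sup id)) (f y ⊔ f (G.sup id)) :=
        hf.2.2.2.1 x y (F'.sup id) (G.sup id) hxy hG3
      rw [hsup]
      refine le_trans (hs.rel_le _ _ hstep) (sup_le ?_ ?_)
      · have h1 : f y ≤ sSup (f '' K) := le_sSup ⟨y, hyK, rfl⟩
        rw [← theta_eq hs hf K] at h1
        exact h1.trans (le_biSup (fun K => sSup (rmap s f K)) hK)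
      · exact ih G hcard' hG1

-- moved

lemma part1 (hr : IsProx r) (hs : IsProx s) (hf : IsProxHom r s f) :
    IsFrmHomR r s (fun I => sSup (rmap s f I)) ∧
      ∀ a : L, sSup (rmap s f (kap r a)) = f a := by
  have hid : ∀ a : L, sSup (rmap s f (kap r a)) = f a := by
    intro a
    rw [theta_eq hs hf]
    show sSup (f '' {b | r b a}) = f a
    exact (hf.2.2.2.2 a).symm
  refine ⟨⟨?_, ?_, ?_, ?_⟩, hid⟩
  · intro I J hI hJ
    simp only
    rw [theta_eq hs hf, theta_eq hs hf, theta_eq hs hf]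
    apply le_antisymm
    · exact le_inf (sSup_le_sSup (Set.image_mono (f := f) Set.inter_subset_left))
        (sSup_le_sSup (Set.image_mono (f := f) Set.inter_subset_right))
    · rw [sSup_inf_sSup]
      apply iSup₂_le
      rintro ⟨m1, m2⟩ hp
      obtain ⟨a, haI, rfl⟩ := (Set.mem_prod.mp hp).1
      obtain ⟨b, hbJ, rfl⟩ := (Set.mem_prod.mp hp).2
      simp only
      rw [← hf.1 a b]
      exact le_sSup ⟨a ⊓ b, ⟨hI.1.2.1 _ a inf_le_left haI, hJ.1.2.1 _ b inf_le_right hbJ⟩, rfl⟩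
  · apply top_unique
    refine le_sSup ⟨⊤, trivial, ?_⟩
    rw [hf.2.1]; exact hs.rel_top
  · intro 𝒥 h𝒥
    apply le_antisymm
    · apply sSup_le
      rintro m ⟨b, ⟨F, hF, rfl⟩, hmb⟩
      exact le_trans (hs.rel_le _ _ hmb) (theta_bound hr hs hf h𝒥 F.card F le_rfl hF)
    · apply iSup₂_le
      intro K hK
      apply theta_mono
      intro a haK
      refine ⟨{a}, ?_, by simp⟩
      simp only [Finset.coe_singleton, Set.singleton_subset_iff]
      exact ⟨K, hK, haK⟩
  · intro I J hI hJ hwb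
    obtain ⟨a, haJ, hIa⟩ := wb_to_kap hr hJ hwb
    obtain ⟨b, hbJ, hab⟩ := hJ.2 a haJ
    have h1 : sSup (rmap s f I) ≤ f a := by
      rw [theta_eq hs hf]
      apply sSup_le
      rintro m ⟨x, hxI, rfl⟩
      rw [hf.2.2.2.2 a]
      exact le_sSup ⟨x, hIa hxI, rfl⟩
    have h2 : f b ≤ sSup (rmap s f J) := by
      rw [theta_eq hs hf]
      exact le_sSup ⟨b, hbJ, rfl⟩
    exact hs.rel_mono _ _ _ _ h1 (f_s_of_r hf hab) h2

end Part1

section Part2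
variable [Order.Frame L] [Order.Frame M] {r : L → L → Prop} {s : M → M → Prop} {ψ : Set L → M}

lemma psi_mono (hψ : IsFrmHomR r s ψ) {I J : Set L}
    (hI : RndIdl r I) (hJ : RndIdl r J) (h : I ⊆ J) : ψ I ≤ ψ J := by
  have h2 := hψ.1 I J hI hJ
  rw [Set.inter_eq_left.mpr h] at h2
  rw [h2]
  exact inf_le_right

lemma part2 (hr : IsProx r) (hs : IsProx s) (hψ : IsFrmHomR r s ψ) :
    IsProxHom r s (fun a => ψ (kap r a)) ∧
      ∀ I : Set L, RndIdl r I →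
        sSup (rmap s (fun a => ψ (kap r a)) I) = ψ I := by
  constructor
  · refine ⟨?_, ?_, ?_, ?_, ?_⟩
    · intro a b
      simp only
      rw [kap_inf hr, hψ.1 _ _ (kap_rnd hr a) (kap_rnd hr b)]
    · simp only
      rw [kap_top hr, hψ.2.1]
    · simp only
      rw [kap_bot hr, hψ.2.2.1 ∅ (by simp)]
      simp
    · intro a₁ b₁ a₂ b₂ h1 h2
      classical
      obtain ⟨c₁, hc₁, hc₁'⟩ := hr.rel_interp _ _ h1
      obtain ⟨c₂, hc₂, hc₂'⟩ := hr.rel_interp _ _ h2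
      set 𝒥 : Set (Set L) := {kap r b₁, kap r b₂} with h𝒥def
      have h𝒥 : ∀ K ∈ 𝒥, RndIdl r K := by
        intro K hK
        simp only [h𝒥def, Set.mem_insert_iff, Set.mem_singleton_iff] at hK
        rcases hK with rfl | rfl <;> exact kap_rnd hr _
      have hJ : ψ (idlJoin 𝒥) = ψ (kap r b₁) ⊔ ψ (kap r b₂) := by
        rw [hψ.2.2.1 𝒥 h𝒥, h𝒥def]
        rw [iSup_insert, iSup_singleton]
      have hmem : c₁ ⊔ c₂ ∈ idlJoin 𝒥 := by
        refine ⟨{c₁, c₂}, ?_, by simp⟩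
        intro z hz
        simp only [Finset.coe_insert, Finset.coe_singleton, Set.mem_insert_iff,
          Set.mem_singleton_iff] at hz
        rcases hz with rfl | rfl
        · exact ⟨kap r b₁, by simp [h𝒥def], hc₁'⟩
        · exact ⟨kap r b₂, by simp [h𝒥def], hc₂'⟩
      have hwb : wb r (kap r (a₁ ⊔ a₂)) (idlJoin 𝒥) :=
        wb_of_kap hr hmem
          (kap_mono hr (sup_le_sup (hr.rel_le _ _ hc₁) (hr.rel_le _ _ hc₂)))
      have hfin := hψ.2.2.2 _ _ (kap_rnd hr _) (idlJoin_rnd hr h𝒥) hwb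
      rw [hJ] at hfin
      exact hfin
    · intro a
      have h1 : kap r a = idlJoin (kap r '' kap r a) := rnd_eq_idlJoin_kap hr (kap_rnd hr a)
      have h𝒥 : ∀ K ∈ kap r '' kap r a, RndIdl r K := by
        rintro K ⟨b, _, rfl⟩; exact kap_rnd hr b
      show ψ (kap r a) = sSup ((fun b => ψ (kap r b)) '' {b | r b a})
      calc ψ (kap r a) = ⨆ K ∈ kap r '' kap r a, ψ K := by
            conv_lhs => rw [h1, hψ.2.2.1 _ h𝒥]
        _ = sSup ((fun b => ψ (kap r b)) '' {b | r b a}) := by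
            rw [iSup_image, sSup_image]; rfl
  · intro I hI
    apply le_antisymm
    · apply sSup_le
      rintro m ⟨b, hbI, hmb⟩
      exact le_trans (hs.rel_le _ _ hmb)
        (psi_mono hψ (kap_rnd hr b) hI (kap_subset_of_mem hr hI.1 hbI))
    · have h1 : ψ I = ⨆ K ∈ kap r '' I, ψ K := by
        have h2 := hψ.2.2.1 (kap r '' I) (by rintro K ⟨b, _, rfl⟩; exact kap_rnd hr b)
        rw [← rnd_eq_idlJoin_kap hr hI] at h2
        exact h2
      rw [h1]
      apply iSup₂_le
      rintro K ⟨b, hbI, rfl⟩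
      obtain ⟨c, hcI, hbc⟩ := hI.2 b hbI
      have hswb : s (ψ (kap r b)) (ψ (kap r c)) := by
        obtain ⟨d, hd1, hd2⟩ := hr.rel_interp b c hbc
        exact hψ.2.2.2 _ _ (kap_rnd hr b) (kap_rnd hr c)
          (wb_of_kap hr hd2 (fun x hx => prox_trans hr hx hd1))
      exact le_sSup ⟨c, hcI, hswb⟩

end Part2

/-- θ(f) = ς_M ∘ 𝔯f and ρ(ψ) = ψ ∘ κ_L are mutually inverse bijections
between proximity homomorphisms L → M and frame homomorphisms 𝔯L → M taking ≪ to ≺. -/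
theorem stmt8 [Order.Frame L] [Order.Frame M] (r : L → L → Prop) (s : M → M → Prop)
    (hr : IsProx r) (hs : IsProx s) :
    (∀ f : L → M, IsProxHom r s f →
      IsFrmHomR r s (fun I => sSup (rmap s f I)) ∧
      ∀ a : L, sSup (rmap s f (kap r a)) = f a) ∧
    (∀ ψ : Set L → M, IsFrmHomR r s ψ →
      IsProxHom r s (fun a => ψ (kap r a)) ∧
      ∀ I : Set L, RndIdl r I →
        sSup (rmap s (fun a => ψ (kap r a)) I) = ψ I) := by
  exact ⟨fun f hf => part1 hr hs hf, fun ψ hψ => part2 hr hs hψ⟩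
end

section
/- For a proximity frame L, the frame 𝔯L of round ideals is stably compact: it is compact, its way-below relation interpolates with every element the join of elements way below it (continuity), a ≪ b and a ≪ c imply a ≪ b∧c, and 1 ≪ 1. Moreover I ≪ J in 𝔯L iff there is a ∈ J with I ⊆ ↓a. -/
open Set

variable {L M : Type*}

lemma kapRndIdl [Order.Frame L] {r : L → L → Prop} (hr : IsProx r) (b : L) :
    RndIdl r (kap r b) := by
  refine ⟨⟨hr.rel_mono ⊥ ⊥ ⊥ b le_rfl hr.rel_bot bot_le, ?_, ?_⟩, ?_⟩
  · intro c d hcd hd; exact hr.rel_mono c d b b hcd hd le_rfl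
  · intro c d hc hd
    have := hr.rel_sup c b d b hc hd; simpa [kap] using this
  · intro c hc
    obtain ⟨e, h1, h2⟩ := hr.rel_interp c b hc
    exact ⟨e, h2, h1⟩

lemma wb_of_bound [Order.Frame L] (r : L → L → Prop) {I J : Set L} {a : L}
    (ha : a ∈ J) (hIa : I ⊆ {b : L | b ≤ a}) : wb r I J := by
  intro 𝒟 _ hRnd _ hJ
  obtain ⟨K, hK, haK⟩ := hJ ha
  exact ⟨K, hK, fun c hc => (hRnd K hK).1.2.1 c a (hIa hc) haK⟩

lemma wb_bound [Order.Frame L] {r : L → L → Prop} (hr : IsProx r) {I J : Set L}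
    (hJ : RndIdl r J) (h : wb r I J) : ∃ a ∈ J, I ⊆ {b : L | b ≤ a} := by
  obtain ⟨K, hK, hIK⟩ := h {K | ∃ b ∈ J, K = kap r b}
    ⟨kap r ⊥, ⊥, hJ.1.1, rfl⟩
    (by rintro K ⟨b, _, rfl⟩; exact kapRndIdl hr b)
    (by
      rintro K ⟨b, hb, rfl⟩ K' ⟨b', hb', rfl⟩
      refine ⟨kap r (b ⊔ b'), ⟨b ⊔ b', hJ.1.2.2 b b' hb hb', rfl⟩, ?_, ?_⟩
      · intro c hc; exact hr.rel_mono c c b (b ⊔ b') le_rfl hc le_sup_left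
      · intro c hc; exact hr.rel_mono c c b' (b ⊔ b') le_rfl hc le_sup_right)
    (by
      intro a ha
      obtain ⟨b, hb, hab⟩ := hJ.2 a ha
      exact ⟨kap r b, ⟨b, hb, rfl⟩, hab⟩)
  obtain ⟨b, hb, rfl⟩ := hK
  exact ⟨b, hb, fun c hc => hr.rel_le c b (hIK hc)⟩

/-- 𝔯L is stably compact: compact (⊤ ≪ ⊤), continuous, ≪ interpolates
and is stable under binary meets, and I ≪ J iff I ⊆ ↓a for some a ∈ J. -/
theorem stmt9 [Order.Frame L] (r : L → L → Prop) (hr : IsProx r) :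
    wb r (Set.univ : Set L) Set.univ ∧
    (∀ J : Set L, RndIdl r J → J = ⋃₀ {I : Set L | RndIdl r I ∧ wb r I J}) ∧
    (∀ I J : Set L, RndIdl r I → RndIdl r J → wb r I J →
      ∃ K : Set L, RndIdl r K ∧ wb r I K ∧ wb r K J) ∧
    (∀ I J K : Set L, RndIdl r I → RndIdl r J → RndIdl r K →
      wb r I J → wb r I K → wb r I (J ∩ K)) ∧
    (∀ I J : Set L, RndIdl r I → RndIdl r J →
      (wb r I J ↔ ∃ a ∈ J, I ⊆ {b : L | b ≤ a})) := by
  refine ⟨?_, ?_, ?_, ?_, ?_⟩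
  · -- compactness
    intro 𝒟 _ hRnd _ hcov
    obtain ⟨K, hK, htop⟩ := hcov (mem_univ (⊤ : L))
    exact ⟨K, hK, fun c _ => (hRnd K hK).1.2.1 c ⊤ le_top htop⟩
  · -- continuity
    intro J hJ
    apply Set.Subset.antisymm
    · intro a ha
      obtain ⟨b, hb, hab⟩ := hJ.2 a ha
      refine ⟨kap r b, ⟨kapRndIdl hr b, ?_⟩, hab⟩
      exact wb_of_bound r hb (fun c hc => hr.rel_le c b hc)
    · intro a ⟨I, ⟨hI, hwb⟩, haI⟩
      obtain ⟨K, hK, hIK⟩ := hwb {J} ⟨J, rfl⟩ (by rintro K rfl; exact hJ)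
        (directedOn_singleton (r := (· ⊆ ·)) J)
        (by simp)
      rw [Set.mem_singleton_iff] at hK; subst hK
      exact hIK haI
  · -- interpolation
    intro I J hI hJ hwb
    obtain ⟨a, haJ, hIa⟩ := wb_bound hr hJ hwb
    obtain ⟨b, hbJ, hab⟩ := hJ.2 a haJ
    exact ⟨kap r b, kapRndIdl hr b, wb_of_bound r hab hIa,
      wb_of_bound r hbJ (fun c hc => hr.rel_le c b hc)⟩
  · -- stability under meets
    intro I J K hI hJ hK hwbJ hwbK
    obtain ⟨a, haJ, hIa⟩ := wb_bound hr hJ hwbJ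
    obtain ⟨b, hbK, hIb⟩ := wb_bound hr hK hwbK
    refine wb_of_bound r (a := a ⊓ b)
      ⟨hJ.1.2.1 (a ⊓ b) a inf_le_left haJ, hK.1.2.1 (a ⊓ b) b inf_le_right hbK⟩
      (fun c hc => le_inf (hIa hc) (hIb hc))
  · -- characterization
    intro I J hI hJ
    exact ⟨fun h => wb_bound hr hJ h, fun ⟨a, ha, hIa⟩ => wb_of_bound r ha hIa⟩
end

section
/- For a proximity homomorphism f : L → M, the frame homomorphism ς_M ∘ 𝔯f : 𝔯L → M takes the way-below relation on 𝔯L to the proximity on M: if I ≪ J then ς_M(𝔯f(I)) ≺ ς_M(𝔯f(J)). -/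
open Set

variable {L M : Type*}

/-- for a proximity homomorphism f, the frame map ς_M ∘ 𝔯f takes the
way-below relation of 𝔯L to the proximity on M. -/
theorem stmt11 [Order.Frame L] [Order.Frame M] (r : L → L → Prop) (s : M → M → Prop)
    (hr : IsProx r) (hs : IsProx s) (f : L → M) (hf : IsProxHom r s f) :
    ∀ I J : Set L, RndIdl r I → RndIdl r J → wb r I J →
      s (sSup (rmap s f I)) (sSup (rmap s f J)) := by
  intro I J hI hJ hIJ
  obtain ⟨hfinf, hftop, hfbot, hfsup, hfapp⟩ := hf
  have fmono : ∀ a b : L, a ≤ b → f a ≤ f b := by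
    intro a b hab
    have : f (a ⊓ b) = f a ⊓ f b := hfinf a b
    rw [inf_eq_left.mpr hab] at this
    exact this.le.trans inf_le_right
  have hsing : ∀ a b : L, r a b → s (f a) (f b) := by
    intro a b hab
    have := hfsup a b ⊥ ⊥ hab hr.rel_bot
    simpa [hfbot] using this
  -- apply wb to the family of kap r b for b ∈ J
  have hkap : ∀ b : L, RndIdl r (kap r b) := by
    intro b
    refine ⟨⟨?_, ?_, ?_⟩, ?_⟩
    · exact hr.rel_mono ⊥ ⊥ ⊥ b le_rfl hr.rel_bot bot_le
    · exact fun a c hac hc => hr.rel_mono a c b b hac hc le_rfl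
    · intro a c ha hc
      have := hr.rel_sup a b c b ha hc
      simpa [kap] using this
    · intro a ha
      obtain ⟨c, hac, hcb⟩ := hr.rel_interp a b ha
      exact ⟨c, hcb, hac⟩
  obtain ⟨K, ⟨b, hbJ, rfl⟩, hIK⟩ :=
    hIJ ((fun b => kap r b) '' J)
      (⟨kap r ⊥, ⊥, hJ.1.1, rfl⟩)
      (by rintro K ⟨b, _, rfl⟩; exact hkap b)
      (by
        rintro K ⟨b, hb, rfl⟩ K' ⟨b', hb', rfl⟩
        refine ⟨kap r (b ⊔ b'), ⟨b ⊔ b', hJ.1.2.2 b b' hb hb', rfl⟩, ?_, ?_⟩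
        · exact fun a ha => hr.rel_mono a a b (b ⊔ b') le_rfl ha le_sup_left
        · exact fun a ha => hr.rel_mono a a b' (b ⊔ b') le_rfl ha le_sup_right)
      (by
        intro a ha
        obtain ⟨c, hcJ, hac⟩ := hJ.2 a ha
        exact ⟨kap r c, ⟨c, hcJ, rfl⟩, hac⟩)
  -- now ∀ a ∈ I, r a b, with b ∈ J
  have h1 : sSup (rmap s f I) ≤ f b := by
    apply sSup_le
    rintro m ⟨a, haI, hma⟩
    exact (hs.rel_le m (f a) hma).trans (fmono a b (hr.rel_le a b (hIK haI)))
  obtain ⟨c, hcJ, hbc⟩ := hJ.2 b hbJ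
  have h2 : f c ≤ sSup (rmap s f J) := by
    rw [hfapp c]
    apply sSup_le
    rintro m ⟨e, hec, rfl⟩
    exact le_sSup ⟨c, hcJ, hsing e c hec⟩
  exact hs.rel_mono _ _ _ _ h1 (hsing b c hbc) h2
end

section
/- For a frame homomorphism ψ : 𝔯L → M that takes ≪ to ≺, the composite f = ψ ∘ κ_L : L → M is a proximity homomorphism. -/
open Set

variable {L M : Type*}

lemma idl_finsetSup [Order.Frame L] {I : Set L} (hI : IsIdl I) (F : Finset L)
    (h : (↑F : Set L) ⊆ I) : F.sup id ∈ I := by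
  classical
  induction F using Finset.induction_on with
  | empty => simpa using hI.1
  | @insert a F ha ih =>
    rw [Finset.sup_insert]
    exact hI.2.2 _ _ (h (by simp)) (ih (fun x hx => h (by simp [hx])))

lemma rndIdl_idlJoin [Order.Frame L] {r : L → L → Prop} (hr : IsProx r)
    {𝒥 : Set (Set L)} (h : ∀ K ∈ 𝒥, RndIdl r K) : RndIdl r (idlJoin 𝒥) := by
  classical
  have hidl : IsIdl (idlJoin 𝒥) := by
    refine ⟨⟨∅, by simp, by simp⟩, ?_, ?_⟩
    · rintro z w hzw ⟨F, hF, rfl⟩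
      refine ⟨F.image (fun f => z ⊓ f), ?_, ?_⟩
      · intro x hx
        simp only [Finset.coe_image, Set.mem_image] at hx
        obtain ⟨f, hf, rfl⟩ := hx
        obtain ⟨K, hK, hfK⟩ := hF hf
        exact ⟨K, hK, (h K hK).1.2.1 _ _ inf_le_right hfK⟩
      · have : (F.image (fun f => z ⊓ f)).sup id = z ⊓ F.sup id := by
          rw [Finset.sup_image, Finset.sup_inf_distrib_left]
          rfl
        rw [this]
        exact (inf_eq_left.mpr hzw).symm
    · rintro x y ⟨F, hF, rfl⟩ ⟨G, hG, rfl⟩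
      exact ⟨F ∪ G, by rw [Finset.coe_union]; exact Set.union_subset hF hG,
        (Finset.sup_union).symm⟩
  have key : ∀ F : Finset L, (↑F : Set L) ⊆ ⋃₀ 𝒥 →
      ∃ c ∈ idlJoin 𝒥, r (F.sup id) c := by
    intro F
    induction F using Finset.induction_on with
    | empty => exact fun _ => ⟨⊥, hidl.1, by simpa using hr.rel_bot⟩
    | @insert a F ha ih =>
      intro hF
      obtain ⟨c, hc, hrc⟩ := ih (fun x hx => hF (by simp [hx]))
      obtain ⟨K, hK, haK⟩ := hF (by simp : a ∈ (↑(insert a F) : Set L))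
      obtain ⟨a', ha'K, hra'⟩ := (h K hK).2 a haK
      have ha'J : a' ∈ idlJoin 𝒥 := ⟨{a'}, by simpa using ⟨K, hK, ha'K⟩, by simp⟩
      refine ⟨a' ⊔ c, hidl.2.2 _ _ ha'J hc, ?_⟩
      rw [Finset.sup_insert]
      exact hr.rel_sup _ _ _ _ hra' hrc
  exact ⟨hidl, by rintro z ⟨F, hF, rfl⟩; exact key F hF⟩

/-- for a frame homomorphism ψ : 𝔯L → M taking ≪ to ≺, the composite
ψ ∘ κ_L is a proximity homomorphism. -/
theorem stmt12 [Order.Frame L] [Order.Frame M] (r : L → L → Prop) (s : M → M → Prop)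
    (hr : IsProx r) (hs : IsProx s) (ψ : Set L → M) (hψ : IsFrmHomR r s ψ) :
    IsProxHom r s (fun a => ψ (kap r a)) := by
  classical
  obtain ⟨hinf, htop, hjoin, hwb⟩ := hψ
  refine ⟨?_, ?_, ?_, ?_, ?_⟩
  · -- meets
    intro a b
    have hk : kap r (a ⊓ b) = kap r a ∩ kap r b := by
      ext c
      constructor
      · intro hc
        exact ⟨hr.rel_mono c c (a ⊓ b) a le_rfl hc inf_le_left,
               hr.rel_mono c c (a ⊓ b) b le_rfl hc inf_le_right⟩
      · rintro ⟨h1, h2⟩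
        exact hr.rel_mono c (c ⊓ c) (a ⊓ b) (a ⊓ b) (le_inf le_rfl le_rfl)
          (hr.rel_inf c a c b h1 h2) le_rfl
    simp only [hk]
    exact hinf _ _ (kap_rndIdl hr a) (kap_rndIdl hr b)
  · -- top
    have hk : kap r (⊤ : L) = Set.univ := by
      ext c
      simp only [Set.mem_univ, iff_true]
      exact hr.rel_mono c ⊤ ⊤ ⊤ le_top hr.rel_top le_rfl
    simp only [hk, htop]
  · -- bot
    have hk : kap r (⊥ : L) = idlJoin (∅ : Set (Set L)) := by
      ext c
      constructor
      · intro hc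
        have : c = ⊥ := le_bot_iff.mp (hr.rel_le c ⊥ hc)
        exact ⟨∅, by simp, by simp [this]⟩
      · rintro ⟨F, hF, rfl⟩
        have : F = ∅ := by
          ext x; simp only [Finset.notMem_empty, iff_false]
          intro hx
          simpa using hF hx
        simp [this, kap]
        exact hr.rel_bot
    simp only [hk, hjoin ∅ (by simp)]
    simp
  · -- sup condition
    intro a₁ b₁ a₂ b₂ h1 h2
    set J : Set (Set L) := {kap r b₁, kap r b₂} with hJdef
    have hJmem : ∀ K ∈ J, RndIdl r K := by
      rintro K (rfl | rfl)
      exacts [kap_rndIdl hr b₁, kap_rndIdl hr b₂]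
    have hJr : RndIdl r (idlJoin J) := rndIdl_idlJoin hr hJmem
    have hwb' : wb r (kap r (a₁ ⊔ a₂)) (idlJoin J) := by
      intro 𝒟 hne h𝒟 hdir hsub
      obtain ⟨c₁, hc1, hc1'⟩ := hr.rel_interp a₁ b₁ h1
      obtain ⟨c₂, hc2, hc2'⟩ := hr.rel_interp a₂ b₂ h2
      have hcJ : c₁ ⊔ c₂ ∈ idlJoin J := by
        refine ⟨{c₁, c₂}, ?_, ?_⟩
        · intro x hx
          simp only [Finset.coe_insert, Finset.coe_singleton, Set.mem_insert_iff,
            Set.mem_singleton_iff] at hx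
          rcases hx with rfl | rfl
          · exact ⟨kap r b₁, Or.inl rfl, hc1'⟩
          · exact ⟨kap r b₂, Or.inr rfl, hc2'⟩
        · simp
      obtain ⟨K, hK, hcK⟩ := hsub hcJ
      refine ⟨K, hK, ?_⟩
      intro x hx
      have hxle : x ≤ c₁ ⊔ c₂ :=
        le_trans (hr.rel_le _ _ hx) (sup_le_sup (hr.rel_le _ _ hc1) (hr.rel_le _ _ hc2))
      exact (h𝒟 K hK).1.2.1 x (c₁ ⊔ c₂) hxle hcK
    have hs1 : s (ψ (kap r (a₁ ⊔ a₂))) (ψ (idlJoin J)) :=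
      hwb _ _ (kap_rndIdl hr _) hJr hwb'
    have heq : ψ (idlJoin J) = ψ (kap r b₁) ⊔ ψ (kap r b₂) := by
      rw [hjoin J hJmem, hJdef]
      exact iSup_pair
    rwa [heq] at hs1
  · -- approximation
    intro a
    have hk : kap r a = idlJoin (kap r '' kap r a) := by
      ext c
      constructor
      · intro hc
        obtain ⟨b, hb1, hb2⟩ := hr.rel_interp c a hc
        refine ⟨{c}, ?_, by simp⟩
        intro x hx
        simp only [Finset.coe_singleton, Set.mem_singleton_iff] at hx
        subst hx
        exact ⟨kap r b, ⟨b, hb2, rfl⟩, hb1⟩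
      · rintro ⟨F, hF, rfl⟩
        refine idl_finsetSup (kap_rndIdl hr a).1 F ?_
        intro x hx
        obtain ⟨K, ⟨b, hb, rfl⟩, hxK⟩ := hF hx
        exact hr.rel_mono x x b a le_rfl hxK (hr.rel_le b a hb)
    have hmem : ∀ K ∈ kap r '' kap r a, RndIdl r K := by
      rintro K ⟨b, _, rfl⟩
      exact kap_rndIdl hr b
    calc ψ (kap r a) = ⨆ K ∈ kap r '' kap r a, ψ K := by
          conv_lhs => rw [hk]
          exact hjoin _ hmem
      _ = ⨆ b ∈ kap r a, ψ (kap r b) := iSup_image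
      _ = sSup ((fun a => ψ (kap r a)) '' {b | r b a}) := (sSup_image).symm
end

section
/- For a proximity homomorphism f : L → M (preserving ≺ in the sense that the round-ideal image is computed via ≺), the square with the frame inclusions m : 𝔯 → 𝔍 commutes: 𝔍f ∘ m_L = m_M ∘ 𝔯f, where 𝔍f(I) = {a | a ≤ f(b) for some b ∈ I}. -/
open Set

variable {L M : Type*}

/-- for a ≺-preserving meet-semilattice homomorphism f and a round
ideal I, the ideal image 𝔍f(I) coincides with the round-ideal image 𝔯f(I):
𝔍f ∘ m_L = m_M ∘ 𝔯f. -/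
theorem stmt13 [Order.Frame L] [Order.Frame M] (r : L → L → Prop) (s : M → M → Prop)
    (hr : IsProx r) (hs : IsProx s) (f : L → M)
    (hf_inf : ∀ a b : L, f (a ⊓ b) = f a ⊓ f b) (hf_top : f ⊤ = ⊤)
    (hf_prox : ∀ a b : L, r a b → s (f a) (f b)) :
    ∀ I : Set L, RndIdl r I →
      {a : M | ∃ b ∈ I, a ≤ f b} = rmap s f I := by
  intro I ⟨hIdl, hRnd⟩
  ext a
  constructor
  · rintro ⟨b, hb, hab⟩
    obtain ⟨c, hc, hbc⟩ := hRnd b hb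
    exact ⟨c, hc, hs.rel_mono a (f b) (f c) (f c) hab (hf_prox b c hbc) le_rfl⟩
  · rintro ⟨b, hb, hsb⟩
    exact ⟨b, hb, hs.rel_le a (f b) hsb⟩
end

section
/- If f : L → M is a frame homomorphism between proximity frames that preserves ≺, then f ∘ ς_L = ς_M ∘ 𝔯f, i.e. f(⋁I) = ⋁𝔯f(I) for every round ideal I of L. Hence ς : 𝔯 → 1 is a natural transformation on the category of proximity frames with ≺-preserving frame homomorphisms. -/
open Set

variable {L M : Type*}

/-- for a ≺-preserving frame homomorphism f, f ∘ ς_L = ς_M ∘ 𝔯f,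
i.e. f(⋁I) = ⋁𝔯f(I) for every round ideal I (naturality of ς). -/
theorem stmt14 [Order.Frame L] [Order.Frame M] (r : L → L → Prop) (s : M → M → Prop)
    (hr : IsProx r) (hs : IsProx s) (f : L → M)
    (hf_sSup : ∀ S : Set L, f (sSup S) = sSup (f '' S))
    (hf_inf : ∀ a b : L, f (a ⊓ b) = f a ⊓ f b) (hf_top : f ⊤ = ⊤)
    (hf_prox : ∀ a b : L, r a b → s (f a) (f b)) :
    ∀ I : Set L, RndIdl r I → f (sSup I) = sSup (rmap s f I) := by
  intro I hI
  have hmono : ∀ a b : L, a ≤ b → f a ≤ f b := by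
    intro a b hab
    have h : f (sSup {a, b}) = sSup (f '' {a, b}) := hf_sSup _
    have h2 : sSup ({a, b} : Set L) = b := by
      simp [sSup_pair, sup_eq_right.mpr hab]
    rw [h2] at h
    rw [h, image_pair, sSup_pair]
    exact le_sup_left
  apply le_antisymm
  · rw [hf_sSup, sSup_le_iff]
    rintro m ⟨b, hb, rfl⟩
    have := hs.rel_apprx (f b)
    rw [this, sSup_le_iff]
    intro c hc
    exact le_sSup ⟨b, hb, hc⟩
  · rw [sSup_le_iff]
    rintro m ⟨b, hb, hm⟩
    exact (hs.rel_le _ _ hm).trans (hmono _ _ (le_sSup hb))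
end

section
/- For every proximity homomorphism f : L → M, the square 𝔯𝔯f ∘ r_L = r_M ∘ 𝔯f commutes, where r_L(I) = {K ∈ 𝔯L | ς_L(K) ∈ I}; thus r is a natural transformation 𝔯 → 𝔯𝔯. -/
open Set

variable {L M : Type*}

lemma hom_mono [Order.Frame L] [Order.Frame M] {r : L → L → Prop} {s : M → M → Prop}
    {f : L → M} (hf : IsProxHom r s f) {a b : L} (h : a ≤ b) : f a ≤ f b := by
  have : f (a ⊓ b) = f a ⊓ f b := hf.1 a b
  rw [inf_eq_left.mpr h] at this
  exact this.le.trans inf_le_right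

lemma hom_rel [Order.Frame L] [Order.Frame M] {r : L → L → Prop} {s : M → M → Prop}
    {f : L → M} (hr : IsProx r) (hf : IsProxHom r s f) {a b : L} (h : r a b) :
    s (f a) (f b) := by
  have := hf.2.2.2.1 a b ⊥ ⊥ h hr.rel_bot
  simpa [hf.2.2.1] using this

/-- naturality of r: 𝔯𝔯f ∘ r_L = r_M ∘ 𝔯f for every proximity
homomorphism f, where r_L(I) = {K ∈ 𝔯L | ς_L(K) ∈ I}. -/
theorem stmt16 [Order.Frame L] [Order.Frame M] (r : L → L → Prop) (s : M → M → Prop)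
    (hr : IsProx r) (hs : IsProx s) (f : L → M) (hf : IsProxHom r s f) :
    ∀ I : Set L, RndIdl r I →
      {K : Set M | RndIdl s K ∧
        ∃ J : Set L, (RndIdl r J ∧ sSup J ∈ I) ∧ wb s K (rmap s f J)} =
      {K : Set M | RndIdl s K ∧ sSup K ∈ rmap s f I} := by
  intro I hI
  ext K
  simp only [mem_setOf_eq]
  constructor
  · rintro ⟨hK, J, ⟨hJ, hJI⟩, hwb⟩
    refine ⟨hK, ?_⟩
    -- apply wb to the directed family {kap s (f b) | b ∈ J}
    have hne : (⊥ : L) ∈ J := hJ.1.1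
    obtain ⟨D, hD, hKD⟩ := hwb ((fun b => kap s (f b)) '' J)
      ⟨kap s (f ⊥), ⟨⊥, hne, rfl⟩⟩
      (by rintro D ⟨b, _, rfl⟩; exact kap_rndIdl hs (f b))
      (by
        rintro D ⟨b, hb, rfl⟩ D' ⟨b', hb', rfl⟩
        refine ⟨kap s (f (b ⊔ b')), ⟨b ⊔ b', hJ.1.2.2 b b' hb hb', rfl⟩, ?_, ?_⟩
        · exact fun x hx => hs.rel_mono x x (f b) (f (b ⊔ b')) le_rfl hx
            (hom_mono hf le_sup_left)
        · exact fun x hx => hs.rel_mono x x (f b') (f (b ⊔ b')) le_rfl hx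
            (hom_mono hf le_sup_right))
      (by rintro a ⟨b, hb, hab⟩; exact ⟨kap s (f b), ⟨b, hb, rfl⟩, hab⟩)
    obtain ⟨b, hb, rfl⟩ := hD
    -- K ⊆ kap s (f b), b ∈ J
    obtain ⟨c, hcI, hc⟩ := hI.2 (sSup J) hJI
    refine ⟨c, hcI, ?_⟩
    have h1 : sSup K ≤ f b := sSup_le fun k hk => hs.rel_le k (f b) (hKD hk)
    have h2 : f b ≤ f (sSup J) := hom_mono hf (le_sSup hb)
    exact hs.rel_mono (sSup K) (f (sSup J)) (f c) (f c) (h1.trans h2)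
      (hom_rel hr hf hc) le_rfl
  · rintro ⟨hK, b, hbI, hb⟩
    refine ⟨hK, ?_⟩
    obtain ⟨b', hb'I, hbb'⟩ := hI.2 b hbI
    refine ⟨kap r b', ⟨kap_rndIdl hr b', ?_⟩, ?_⟩
    · rw [show sSup (kap r b') = b' from (hr.rel_apprx b').symm]
      exact hb'I
    · -- wb: find m ∈ rmap s f (kap r b') with K ⊆ kap s m
      obtain ⟨m, hm1, hm2⟩ := hs.rel_interp (sSup K) (f b) hb
      have hmJ : m ∈ rmap s f (kap r b') := ⟨b, hbb', hm2⟩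
      intro 𝒟 _ h𝒟 _ hcov
      obtain ⟨D, hD, hmD⟩ := hcov hmJ
      refine ⟨D, hD, fun k hk => ?_⟩
      have : k ≤ m := (le_sSup hk).trans (hs.rel_le _ _ hm1)
      exact (h𝒟 D hD).1.2.1 k m this hmD
end
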